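/- arXiv:1809.05555 — 7 statements merged into one kernel-verified Lean document; each statement's English description precedes it below -/
import Mathlib

section
/- Let A = {x ∈ E : f_i(x) ≤ 0, i = 1,…,m} and B = {x ∈ E : g_j(x) ≤ 0, j = 1,…,n} be convex bodies in a real inner product space E, with each f_i, g_j convex and differentiable. Suppose a1 ∈ A, a2 ∈ B and there are multipliers l_1,…,l_m satisfying complementarity at a1 for the f_i and multipliers m_1,…,m_n satisfying complementarity at a2 for the g_j such that a2 − a1 = Σ_i l_i ∇f_i(a1) and a1 − a2 = Σ_j m_j ∇g_j(a2). Then (a1, a2) is a pair of closest points of A and B: for every x ∈ A and every y ∈ B, ‖a1 − a2‖ ≤ ‖x − y‖. -/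
open RealInnerProductSpace Set

/-!
By the gradient inequality for convex functions, a nonnegative combination of constraint gradients
with complementary multipliers is an outer normal of the feasible set. So the contact equations make
`a2 - a1` an outer normal of `A` at `a1` and `a1 - a2` one of `B` at `a2`; the two supporting
hyperplanes bound a slab of width `‖a1 - a2‖` that separates `A` from `B`.
-/

theorem ConvexOn.le_sub_of_hasFDerivAt {E : Type*} [NormedAddCommGroup E] [NormedSpace ℝ E]
    {s : Set E} {f : E → ℝ} {f' : E →L[ℝ] ℝ} {a x : E} (hf : ConvexOn ℝ s f) (ha : a ∈ s)
    (hx : x ∈ s) (hfa : HasFDerivAt f f' a) :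
    f' (x - a) ≤ f x - f a := by
  set L : ℝ →ᵃ[ℝ] E := AffineMap.lineMap a x
  have hline : ConvexOn ℝ (L ⁻¹' s) (f ∘ L) := hf.comp_affineMap L
  have hderiv : HasDerivAt (f ∘ L) (f' (x - a)) 0 :=
    (show L 0 = a by simp [L]) ▸ hfa |>.comp_hasDerivAt 0 AffineMap.hasDerivAt_lineMap
  have := hline.le_slope_of_hasDerivAt (x := 0) (y := 1) (by simpa [L] using ha)
    (by simpa [L] using hx) zero_lt_one hderiv
  simpa [slope, L] using this

theorem ConvexOn.inner_le_sub_of_hasGradientAt {E : Type*} [NormedAddCommGroup E]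
    [InnerProductSpace ℝ E] [CompleteSpace E] {s : Set E} {f : E → ℝ} {G a x : E}
    (hf : ConvexOn ℝ s f) (ha : a ∈ s) (hx : x ∈ s) (hfa : HasGradientAt f G a) :
    ⟪G, x - a⟫ ≤ f x - f a :=
  hf.le_sub_of_hasFDerivAt ha hx hfa.hasFDerivAt

theorem inner_sum_smul_sub_nonpos_of_complementarity {E ι : Type*} [NormedAddCommGroup E]
    [InnerProductSpace ℝ E] [CompleteSpace E] [Fintype ι] {s : Set E} {f : ι → E → ℝ}
    {G : ι → E} {l : ι → ℝ} {a x : E} (hf : ∀ i, ConvexOn ℝ s (f i)) (ha : a ∈ s) (hx : x ∈ s)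
    (hG : ∀ i, HasGradientAt (f i) (G i) a) (hl : ∀ i, 0 ≤ l i) (hcomp : ∀ i, l i * f i a = 0)
    (hfx : ∀ i, f i x ≤ 0) :
    ⟪∑ i, l i • G i, x - a⟫ ≤ 0 := by
  rw [sum_inner]
  refine Finset.sum_nonpos fun i _ => ?_
  -- `lᵢ ⟪Gᵢ, x - a⟫ ≤ lᵢ (fᵢ x - fᵢ a) = lᵢ fᵢ x ≤ 0`
  have hgrad := mul_le_mul_of_nonneg_left
    ((hf i).inner_le_sub_of_hasGradientAt ha hx (hG i)) (hl i)
  rw [real_inner_smul_left]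
  nlinarith [hgrad, hl i, hcomp i, hfx i]

/-- `‖a₁ - a₂‖² ≤ ⟪a₁ - a₂, x - y⟫ ≤ ‖a₁ - a₂‖ ‖x - y‖` -/
theorem norm_sub_le_norm_sub_of_inner_nonpos {E : Type*} [NormedAddCommGroup E]
    [InnerProductSpace ℝ E] {a₁ a₂ x y : E} (hx : ⟪a₂ - a₁, x - a₁⟫ ≤ 0)
    (hy : ⟪a₁ - a₂, y - a₂⟫ ≤ 0) :
    ‖a₁ - a₂‖ ≤ ‖x - y‖ := by
  set d := a₁ - a₂
  have hsplit : ⟪d, x - y⟫ = ⟪d, d⟫ - ⟪a₂ - a₁, x - a₁⟫ - ⟪d, y - a₂⟫ := by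
    have hx' : x - y = d + (x - a₁) - (y - a₂) := by simp only [d]; abel
    rw [hx', inner_sub_right, inner_add_right, show a₂ - a₁ = -d by simp [d], inner_neg_left]
    ring
  have hkey : ‖d‖ * ‖d‖ ≤ ‖d‖ * ‖x - y‖ := by
    rw [← real_inner_self_eq_norm_mul_norm]
    linarith [real_inner_le_norm d (x - y)]
  nlinarith [norm_nonneg d, norm_nonneg (x - y)]

theorem closest_points_of_kkt_general
    {E : Type*} [NormedAddCommGroup E] [InnerProductSpace ℝ E] [CompleteSpace E]
    {m n : ℕ} (f : Fin m → E → ℝ) (g : Fin n → E → ℝ)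
    (f' : Fin m → E → E) (g' : Fin n → E → E)
    (hfconv : ∀ i, ConvexOn ℝ Set.univ (f i))
    (hgconv : ∀ j, ConvexOn ℝ Set.univ (g j))
    (hfgrad : ∀ i x, HasGradientAt (f i) (f' i x) x)
    (hggrad : ∀ j x, HasGradientAt (g j) (g' j x) x)
    (A B : Set E)
    (hA : A = {x : E | ∀ i, f i x ≤ 0})
    (hB : B = {x : E | ∀ j, g j x ≤ 0})
    (a1 a2 : E)
    (l : Fin m → ℝ) (μ : Fin n → ℝ)
    -- complementarity of the multipliers l at a1 for the f i
    (hl_nonneg : ∀ i, 0 ≤ l i)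
    (hl_comp : ∀ i, l i * f i a1 = 0)
    -- complementarity of the multipliers μ at a2 for the g j
    (hμ_nonneg : ∀ j, 0 ≤ μ j)
    (hμ_comp : ∀ j, μ j * g j a2 = 0)
    -- the KKT-derived contact equations
    (heq1 : a2 - a1 = ∑ i, l i • f' i a1)
    (heq2 : a1 - a2 = ∑ j, μ j • g' j a2) :
    ∀ x ∈ A, ∀ y ∈ B, ‖a1 - a2‖ ≤ ‖x - y‖ := by
  rintro x hx y hy
  rw [hA] at hx
  rw [hB] at hy
  apply norm_sub_le_norm_sub_of_inner_nonpos
  · rw [heq1]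
    exact inner_sum_smul_sub_nonpos_of_complementarity hfconv (mem_univ a1) (mem_univ x)
      (fun i => hfgrad i a1) hl_nonneg hl_comp hx
  · rw [heq2]
    exact inner_sum_smul_sub_nonpos_of_complementarity hgconv (mem_univ a2) (mem_univ y)
      (fun j => hggrad j a2) hμ_nonneg hμ_comp hy

/-- Separation case of Proposition 1: the KKT-derived contact equations force the
equivalent contact points to be the closest points of the two convex bodies. -/
theorem closest_points_of_kkt
    {E : Type*} [NormedAddCommGroup E] [InnerProductSpace ℝ E] [CompleteSpace E]
    {m n : ℕ} (f : Fin m → E → ℝ) (g : Fin n → E → ℝ)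
    (f' : Fin m → E → E) (g' : Fin n → E → E)
    (hfconv : ∀ i, ConvexOn ℝ Set.univ (f i))
    (hgconv : ∀ j, ConvexOn ℝ Set.univ (g j))
    (hfgrad : ∀ i x, HasGradientAt (f i) (f' i x) x)
    (hggrad : ∀ j x, HasGradientAt (g j) (g' j x) x)
    (A B : Set E)
    (hA : A = {x : E | ∀ i, f i x ≤ 0})
    (hB : B = {x : E | ∀ j, g j x ≤ 0})
    (a1 a2 : E) (ha1 : a1 ∈ A) (ha2 : a2 ∈ B)
    (l : Fin m → ℝ) (μ : Fin n → ℝ)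
    -- complementarity of the multipliers l at a1 for the f i
    (hl_nonneg : ∀ i, 0 ≤ l i) (hl_feas : ∀ i, f i a1 ≤ 0)
    (hl_comp : ∀ i, l i * f i a1 = 0)
    -- complementarity of the multipliers μ at a2 for the g j
    (hμ_nonneg : ∀ j, 0 ≤ μ j) (hμ_feas : ∀ j, g j a2 ≤ 0)
    (hμ_comp : ∀ j, μ j * g j a2 = 0)
    -- the KKT-derived contact equations
    (heq1 : a2 - a1 = ∑ i, l i • f' i a1)
    (heq2 : a1 - a2 = ∑ j, μ j • g' j a2) :
    ∀ x ∈ A, ∀ y ∈ B, ‖a1 - a2‖ ≤ ‖x - y‖ :=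
  closest_points_of_kkt_general f g f' g' hfconv hgconv hfgrad hggrad A B hA hB a1 a2 l μ hl_nonneg
    hl_comp hμ_nonneg hμ_comp heq1 heq2
end

section
/- Let A = {x ∈ E : f_i(x) ≤ 0, i = 1,…,m} and B = {x ∈ E : g_j(x) ≤ 0, j = 1,…,n} be convex bodies in a real inner product space E, with each f_i, g_j convex and differentiable. Suppose a1 ∈ A, a2 ∈ B and there exist multipliers l_1,…,l_m satisfying complementarity at a1 for the f_i, multipliers m_1,…,m_n satisfying complementarity at a2 for the g_j, a nonzero vector w with w = Σ_i l_i ∇f_i(a1) and w = −Σ_j m_j ∇g_j(a2), and a scalar c ≥ 0 with a2 − a1 = c·w. Then the interiors of A and B are disjoint: interior(A) ∩ interior(B) = ∅ (there is no artificial penetration between the bodies). -/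
open RealInnerProductSpace

/-!
The KKT conditions at `a1`, together with the first-order inequality for convex functions, put
`A` in the half space `⟪w, ·⟫ ≤ ⟪w, a1⟫`; likewise `B` lies in `⟪w, a2⟫ ≤ ⟪w, ·⟫`. Since
`a2 - a1 = c • w` with `c ≥ 0`, the second threshold is not below the first, and as `w ≠ 0` the
interior of `A` lies in the open half space `⟪w, ·⟫ < ⟪w, a1⟫`, which misses `B`.
-/

theorem ConvexOn.add_inner_le_of_hasGradientAt
    {E : Type*} [NormedAddCommGroup E] [InnerProductSpace ℝ E] [CompleteSpace E]
    {s : Set E} {f : E → ℝ} {f' x y : E} (hf : ConvexOn ℝ s f) (hx : x ∈ s) (hy : y ∈ s)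
    (hgrad : HasGradientAt f f' x) :
    f x + ⟪f', y - x⟫ ≤ f y := by
  let L : ℝ →ᵃ[ℝ] E := AffineMap.lineMap x y
  have hline : ConvexOn ℝ (L ⁻¹' s) (f ∘ L) := hf.comp_affineMap L
  have hderiv : HasDerivAt (f ∘ L) ⟪f', y - x⟫ 0 := by
    have hfx := hgrad.hasFDerivAt
    rw [← AffineMap.lineMap_apply_zero (k := ℝ) x y] at hfx
    simpa using hfx.comp_hasDerivAt (0 : ℝ) AffineMap.hasDerivAt_lineMap
  have hslope := hline.le_slope_of_hasDerivAt (by simpa [L] using hx) (by simpa [L] using hy)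
    zero_lt_one hderiv
  simp only [slope_def_field, Function.comp_apply, L, AffineMap.lineMap_apply_zero,
    AffineMap.lineMap_apply_one, sub_zero, div_one] at hslope
  linarith

theorem inner_sum_smul_gradient_sub_nonpos
    {E ι : Type*} [NormedAddCommGroup E] [InnerProductSpace ℝ E] [CompleteSpace E] [Fintype ι]
    {f : ι → E → ℝ} {f' : ι → E} {l : ι → ℝ} {a x : E}
    (hconv : ∀ i, ConvexOn ℝ Set.univ (f i)) (hgrad : ∀ i, HasGradientAt (f i) (f' i) a)
    (hl : ∀ i, 0 ≤ l i) (hcomp : ∀ i, l i * f i a = 0) (hx : ∀ i, f i x ≤ 0) :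
    ⟪∑ i, l i • f' i, x - a⟫ ≤ 0 := by
  rw [sum_inner]
  refine Finset.sum_nonpos fun i _ => ?_
  have hsub := (hconv i).add_inner_le_of_hasGradientAt (Set.mem_univ a) (Set.mem_univ x) (hgrad i)
  calc ⟪l i • f' i, x - a⟫ = l i * ⟪f' i, x - a⟫ := real_inner_smul_left _ _ _
    _ ≤ l i * (f i x - f i a) := mul_le_mul_of_nonneg_left (by linarith) (hl i)
    _ = l i * f i x := by linarith [hcomp i]
    _ ≤ 0 := mul_nonpos_of_nonneg_of_nonpos (hl i) (hx i)

theorem interior_setOf_inner_le_subset {E : Type*} [NormedAddCommGroup E] [InnerProductSpace ℝ E]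
    {w : E} (hw : w ≠ 0) (b : ℝ) :
    interior {x | ⟪w, x⟫ ≤ b} ⊆ {x | ⟪w, x⟫ < b} := by
  have hne : innerSL ℝ w ≠ 0 := fun h => hw <| by
    simpa using congrArg (fun φ : StrongDual ℝ E => φ w) h
  have hopen := ContinuousLinearMap.isOpenMap_of_ne_zero _ hne
  have hpre := hopen.preimage_interior_eq_interior_preimage (innerSL ℝ w).continuous (Set.Iic b)
  rw [interior_Iic] at hpre
  intro x hx
  change x ∈ interior (innerSL ℝ w ⁻¹' Set.Iic b) at hx
  rw [← hpre] at hx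
  simpa using hx

theorem disjoint_interior_of_inner_le_of_le_inner
    {E : Type*} [NormedAddCommGroup E] [InnerProductSpace ℝ E] {A B : Set E} {w : E} (hw : w ≠ 0)
    {b₁ b₂ : ℝ} (hb : b₁ ≤ b₂) (hA : ∀ x ∈ A, ⟪w, x⟫ ≤ b₁) (hB : ∀ x ∈ B, b₂ ≤ ⟪w, x⟫) :
    Disjoint (interior A) (interior B) := by
  refine Set.disjoint_left.mpr fun x hxA hxB => ?_
  have hlt : ⟪w, x⟫ < b₁ := interior_setOf_inner_le_subset hw b₁ (interior_mono hA hxA)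
  linarith [hB x (interior_subset hxB)]

theorem no_penetration_of_contact_equations_general
    {E : Type*} [NormedAddCommGroup E] [InnerProductSpace ℝ E] [CompleteSpace E]
    {m n : ℕ} (f : Fin m → E → ℝ) (g : Fin n → E → ℝ)
    (f' : Fin m → E → E) (g' : Fin n → E → E)
    (hfconv : ∀ i, ConvexOn ℝ Set.univ (f i))
    (hgconv : ∀ j, ConvexOn ℝ Set.univ (g j))
    (hfgrad : ∀ i x, HasGradientAt (f i) (f' i x) x)
    (hggrad : ∀ j x, HasGradientAt (g j) (g' j x) x)
    (A B : Set E)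
    (hA : A = {x : E | ∀ i, f i x ≤ 0})
    (hB : B = {x : E | ∀ j, g j x ≤ 0})
    (a1 a2 : E)
    (l : Fin m → ℝ) (μ : Fin n → ℝ)
    -- complementarity of the multipliers l at a1 for the f i
    (hl_nonneg : ∀ i, 0 ≤ l i)
    (hl_comp : ∀ i, l i * f i a1 = 0)
    -- complementarity of the multipliers μ at a2 for the g j
    (hμ_nonneg : ∀ j, 0 ≤ μ j)
    (hμ_comp : ∀ j, μ j * g j a2 = 0)
    (w : E) (hw_ne : w ≠ 0)
    (hw_f : w = ∑ i, l i • f' i a1)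
    (hw_g : w = -∑ j, μ j • g' j a2)
    (c : ℝ) (hc : 0 ≤ c)
    (hsep : a2 - a1 = c • w) :
    interior A ∩ interior B = ∅ := by
  subst hA hB
  have hA_le : ∀ x ∈ {x : E | ∀ i, f i x ≤ 0}, ⟪w, x⟫ ≤ ⟪w, a1⟫ := fun x hx => by
    have h := inner_sum_smul_gradient_sub_nonpos hfconv (fun i => hfgrad i a1) hl_nonneg hl_comp hx
    rw [← hw_f, inner_sub_right] at h
    linarith
  have hB_ge : ∀ x ∈ {x : E | ∀ j, g j x ≤ 0}, ⟪w, a2⟫ ≤ ⟪w, x⟫ := fun x hx => by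
    have h := inner_sum_smul_gradient_sub_nonpos hgconv (fun j => hggrad j a2) hμ_nonneg hμ_comp hx
    rw [← neg_eq_iff_eq_neg.mpr hw_g, inner_neg_left, inner_sub_right] at h
    linarith
  have hgap : ⟪w, a1⟫ ≤ ⟪w, a2⟫ := by
    have h : ⟪w, a2 - a1⟫ = c * ‖w‖ ^ 2 := by
      rw [hsep, real_inner_smul_right, real_inner_self_eq_norm_sq]
    rw [inner_sub_right] at h
    linarith [mul_nonneg hc (sq_nonneg ‖w‖)]
  exact Set.disjoint_iff_inter_eq_empty.mp
    (disjoint_interior_of_inner_le_of_le_inner hw_ne hgap hA_le hB_ge)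

/-- Proposition 1 in full: any solution of the geometrically implicit contact equations
corresponds either to separated bodies or to bodies touching without inter-penetration,
hence the interiors of the two bodies are disjoint. -/
theorem no_penetration_of_contact_equations
    {E : Type*} [NormedAddCommGroup E] [InnerProductSpace ℝ E] [CompleteSpace E]
    {m n : ℕ} (f : Fin m → E → ℝ) (g : Fin n → E → ℝ)
    (f' : Fin m → E → E) (g' : Fin n → E → E)
    (hfconv : ∀ i, ConvexOn ℝ Set.univ (f i))
    (hgconv : ∀ j, ConvexOn ℝ Set.univ (g j))
    (hfgrad : ∀ i x, HasGradientAt (f i) (f' i x) x)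
    (hggrad : ∀ j x, HasGradientAt (g j) (g' j x) x)
    (A B : Set E)
    (hA : A = {x : E | ∀ i, f i x ≤ 0})
    (hB : B = {x : E | ∀ j, g j x ≤ 0})
    (a1 a2 : E) (ha1 : a1 ∈ A) (ha2 : a2 ∈ B)
    (l : Fin m → ℝ) (μ : Fin n → ℝ)
    -- complementarity of the multipliers l at a1 for the f i
    (hl_nonneg : ∀ i, 0 ≤ l i) (hl_feas : ∀ i, f i a1 ≤ 0)
    (hl_comp : ∀ i, l i * f i a1 = 0)
    -- complementarity of the multipliers μ at a2 for the g j
    (hμ_nonneg : ∀ j, 0 ≤ μ j) (hμ_feas : ∀ j, g j a2 ≤ 0)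
    (hμ_comp : ∀ j, μ j * g j a2 = 0)
    (w : E) (hw_ne : w ≠ 0)
    (hw_f : w = ∑ i, l i • f' i a1)
    (hw_g : w = -∑ j, μ j • g' j a2)
    (c : ℝ) (hc : 0 ≤ c)
    (hsep : a2 - a1 = c • w) :
    interior A ∩ interior B = ∅ :=
  no_penetration_of_contact_equations_general f g f' g' hfconv hgconv hfgrad hggrad A B hA hB a1 a2
    l μ hl_nonneg hl_comp hμ_nonneg hμ_comp w hw_ne hw_f hw_g c hc hsep
end

section
/- Let A = {x ∈ E : f_i(x) ≤ 0, i = 1,…,m} and B = {x ∈ E : g_j(x) ≤ 0, j = 1,…,n} be convex bodies in a real inner product space E, with each f_i, g_j convex and differentiable. Suppose a1 ∈ A, a2 ∈ E, an index k, and multipliers l_1,…,l_m satisfying complementarity at a1 for the f_i are such that: (i) a1 − a2 = −l_k·(∇f_k(a1) + Σ_{i≠k} l_i ∇f_i(a1)); (ii) there are multipliers m_1,…,m_n satisfying complementarity at a2 for the g_j with ∇f_k(a1) + Σ_{i≠k} l_i ∇f_i(a1) = −Σ_j m_j ∇g_j(a2); (iii) ∇f_k(a1) + Σ_{i≠k}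 l_i ∇f_i(a1) ≠ 0; and (iv) max_i f_i(a2) ≥ 0 (the non-penetration complementarity constraint with positive normal impulse). Then a1 lies on the boundary of A and a2 lies on the boundary of B in the sense that there exists an index i with f_i(a1) = 0 and there exists an index j with g_j(a2) = 0. -/
open RealInnerProductSpace

/-- Boundary step in the proof of Proposition 1: the equivalent contact points produced by
the KKT-derived contact equations lie on the boundaries of their respective bodies, i.e. at
least one of the defining constraints is active at each of them. -/
theorem ecp_on_boundary
    {E : Type*} [NormedAddCommGroup E] [InnerProductSpace ℝ E] [CompleteSpace E]
    {m n : ℕ} (f : Fin m → E → ℝ) (g : Fin n → E → ℝ)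
    (f' : Fin m → E → E) (g' : Fin n → E → E)
    (hfconv : ∀ i, ConvexOn ℝ Set.univ (f i))
    (hgconv : ∀ j, ConvexOn ℝ Set.univ (g j))
    (hfgrad : ∀ i x, HasGradientAt (f i) (f' i x) x)
    (hggrad : ∀ j x, HasGradientAt (g j) (g' j x) x)
    (A : Set E) (hA : A = {x : E | ∀ i, f i x ≤ 0})
    (a1 : E) (ha1 : a1 ∈ A) (a2 : E) (k : Fin m)
    (l : Fin m → ℝ) (μ : Fin n → ℝ)
    -- complementarity of the multipliers l at a1 for the f i
    (hl_nonneg : ∀ i, 0 ≤ l i) (hl_feas : ∀ i, f i a1 ≤ 0)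
    (hl_comp : ∀ i, l i * f i a1 = 0)
    -- (i)
    (heq1 : a1 - a2 =
      -(l k) • (f' k a1 + ∑ i ∈ Finset.univ.erase k, l i • f' i a1))
    -- (ii) with complementarity of the multipliers μ at a2 for the g j
    (hμ_nonneg : ∀ j, 0 ≤ μ j) (hμ_feas : ∀ j, g j a2 ≤ 0)
    (hμ_comp : ∀ j, μ j * g j a2 = 0)
    (heq2 : f' k a1 + ∑ i ∈ Finset.univ.erase k, l i • f' i a1 =
      -∑ j, μ j • g' j a2)
    -- (iii)
    (hne : f' k a1 + ∑ i ∈ Finset.univ.erase k, l i • f' i a1 ≠ 0)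
    -- (iv) the non-penetration complementarity constraint with positive normal impulse
    (hmax : 0 ≤ Finset.univ.sup' ⟨k, Finset.mem_univ k⟩ (fun i => f i a2)) :
    (∃ i, f i a1 = 0) ∧ (∃ j, g j a2 = 0) := by
  constructor
  · by_cases hlk : l k = 0
    · have ha : a1 = a2 := by
        have h := heq1
        rw [hlk] at h
        simp at h
        exact sub_eq_zero.mp h
      obtain ⟨i, -, hi⟩ := Finset.exists_mem_eq_sup' ⟨k, Finset.mem_univ k⟩
        (fun i => f i a2)
      refine ⟨i, le_antisymm (hl_feas i) ?_⟩
      rw [ha]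
      rw [hi] at hmax
      exact hmax
    · refine ⟨k, ?_⟩
      rcases mul_eq_zero.mp (hl_comp k) with h | h
      · exact absurd h hlk
      · exact h
  · by_contra h
    push_neg at h
    have hμ0 : ∀ j, μ j = 0 := by
      intro j
      rcases mul_eq_zero.mp (hμ_comp j) with h' | h'
      · exact h'
      · exact absurd h' (h j)
    apply hne
    rw [heq2]
    simp [hμ0]
end

section
/- In the discrete-time model of pure-translation planar sliding (governing equations as in the context, with P_n ≥ 0 and slip speed σ ≠ 0), the sums of the contact impulses over all patches are uniquely determined in closed form: T² + O² > 0, P_n = −⟨n, J⟩, P_r = 0, P_t = −e·μ·P_n·T/√(T² + O²), and P_o = −e·μ·P_n·O/√(T² + O²), where T = ⟨t, J⟩ + m·⟨t, v⁰⟩ and O = ⟨o, J⟩ + m·⟨o, v⁰⟩. -/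
open RealInnerProductSpace

/-- Proposition 2 (impulse part): in the discrete-time model of pure-translation planar
sliding, the sums of the contact impulses over all patches are uniquely determined in
closed form. -/
theorem pure_translation_impulse_sums
    (m e μ : ℝ) (hm : 0 < m) (he : 0 < e) (hμ : 0 < μ)
    (t o n J v0 v : EuclideanSpace ℝ (Fin 3))
    (hframe : Orthonormal ℝ ![t, o, n])
    (Pn Pt Po Pr σ T O : ℝ)
    (hT : T = ⟪t, J⟫ + m * ⟪t, v0⟫)
    (hO : O = ⟪o, J⟫ + m * ⟪o, v0⟫)
    (hv0n : ⟪n, v0⟫ = 0) (hvn : ⟪n, v⟫ = 0)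
    -- discretized Newton equations
    (hN1 : m * ⟪t, v⟫ = Pt + ⟪t, J⟫ + m * ⟪t, v0⟫)
    (hN2 : m * ⟪o, v⟫ = Po + ⟪o, J⟫ + m * ⟪o, v0⟫)
    (hN3 : m * ⟪n, v⟫ = Pn + ⟪n, J⟫ + m * ⟪n, v0⟫)
    -- slip speed and aggregated friction equations
    (hσ : σ = e * Real.sqrt (⟪t, v⟫ ^ 2 + ⟪o, v⟫ ^ 2))
    (hF1 : 0 = e ^ 2 * μ * ⟪t, v⟫ * Pn + σ * Pt)
    (hF2 : 0 = e ^ 2 * μ * ⟪o, v⟫ * Pn + σ * Po)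
    (hF3 : 0 = σ * Pr)
    (hPn : 0 ≤ Pn) (hσne : σ ≠ 0) :
    0 < T ^ 2 + O ^ 2 ∧
    Pn = -⟪n, J⟫ ∧
    Pr = 0 ∧
    Pt = -(e * μ * Pn * T) / Real.sqrt (T ^ 2 + O ^ 2) ∧
    Po = -(e * μ * Pn * O) / Real.sqrt (T ^ 2 + O ^ 2) := by
  set vt := ⟪t, v⟫ with hvt
  set vo := ⟪o, v⟫ with hvo
  have hσpos : 0 < σ := by
    rcases lt_or_eq_of_le (Real.sqrt_nonneg (vt ^ 2 + vo ^ 2)) with h | h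
    · rw [hσ]; positivity
    · exfalso; apply hσne; rw [hσ, ← h, mul_zero]
  have hPt : Pt = -(e ^ 2 * μ * vt * Pn) / σ := by
    field_simp
    linarith
  have hPo : Po = -(e ^ 2 * μ * vo * Pn) / σ := by
    field_simp
    linarith
  set k := m + e ^ 2 * μ * Pn / σ with hk
  have hkpos : 0 < k := by
    have h1 : 0 ≤ e ^ 2 * μ * Pn / σ := div_nonneg (by positivity) hσpos.le
    rw [hk]; linarith
  have hTk : T = k * vt := by
    rw [hT, hk]
    have := hN1
    rw [hPt] at this
    field_simp at this ⊢
    linarith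
  have hOk : O = k * vo := by
    rw [hO, hk]
    have := hN2
    rw [hPo] at this
    field_simp at this ⊢
    linarith
  have hsq : vt ^ 2 + vo ^ 2 = (σ / e) ^ 2 := by
    have h1 : Real.sqrt (vt ^ 2 + vo ^ 2) = σ / e := by
      rw [hσ]; field_simp
    have h2 : 0 ≤ vt ^ 2 + vo ^ 2 := by positivity
    rw [← h1, Real.sq_sqrt h2]
  have hTO : T ^ 2 + O ^ 2 = (k * σ / e) ^ 2 := by
    rw [hTk, hOk]
    have : (k * vt) ^ 2 + (k * vo) ^ 2 = k ^ 2 * (vt ^ 2 + vo ^ 2) := by ring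
    rw [this, hsq]
    field_simp
  have hsqrt : Real.sqrt (T ^ 2 + O ^ 2) = k * σ / e := by
    rw [hTO, Real.sqrt_sq (by positivity)]
  refine ⟨?_, ?_, ?_, ?_, ?_⟩
  · rw [hTO]; positivity
  · rw [hvn] at hN3; rw [hv0n] at hN3; linarith
  · rcases mul_eq_zero.mp hF3.symm with h | h
    · exact absurd h hσne
    · exact h
  · rw [hsqrt, hPt, hTk]
    field_simp
  · rw [hsqrt, hPo, hOk]
    field_simp
end

section
/- In the discrete-time model of pure-translation planar sliding (governing equations as in the context, with P_n ≥ 0 and slip speed σ ≠ 0), the end-of-step velocity is uniquely determined in closed form: writing U = √(T² + O²) with T = ⟨t, J⟩ + m·⟨t, v⁰⟩ and O = ⟨o, J⟩ + m·⟨o, v⁰⟩, one necessarily has U > e·μ·P_n, and the velocity components satisfy ⟨t, v⟩ = T·(U − e·μ·P_n)/(m·U), ⟨o, v⟩ = O·(U − e·μ·P_n)/(m·U), and ⟨n, v⟩ = 0. -/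
open RealInnerProductSpace

/-- Proposition 2 (velocity part): in the discrete-time model of pure-translation planar
sliding, the end-of-step velocity is uniquely determined in closed form. -/
theorem pure_translation_velocity
    (m e μ : ℝ) (hm : 0 < m) (he : 0 < e) (hμ : 0 < μ)
    (t o n J v0 v : EuclideanSpace ℝ (Fin 3))
    (hframe : Orthonormal ℝ ![t, o, n])
    (Pn Pt Po Pr σ T O U : ℝ)
    (hT : T = ⟪t, J⟫ + m * ⟪t, v0⟫)
    (hO : O = ⟪o, J⟫ + m * ⟪o, v0⟫)
    (hU : U = Real.sqrt (T ^ 2 + O ^ 2))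
    (hv0n : ⟪n, v0⟫ = 0) (hvn : ⟪n, v⟫ = 0)
    -- discretized Newton equations
    (hN1 : m * ⟪t, v⟫ = Pt + ⟪t, J⟫ + m * ⟪t, v0⟫)
    (hN2 : m * ⟪o, v⟫ = Po + ⟪o, J⟫ + m * ⟪o, v0⟫)
    (hN3 : m * ⟪n, v⟫ = Pn + ⟪n, J⟫ + m * ⟪n, v0⟫)
    -- slip speed and aggregated friction equations
    (hσ : σ = e * Real.sqrt (⟪t, v⟫ ^ 2 + ⟪o, v⟫ ^ 2))
    (hF1 : 0 = e ^ 2 * μ * ⟪t, v⟫ * Pn + σ * Pt)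
    (hF2 : 0 = e ^ 2 * μ * ⟪o, v⟫ * Pn + σ * Po)
    (hF3 : 0 = σ * Pr)
    (hPn : 0 ≤ Pn) (hσne : σ ≠ 0) :
    e * μ * Pn < U ∧
    ⟪t, v⟫ = T * (U - e * μ * Pn) / (m * U) ∧
    ⟪o, v⟫ = O * (U - e * μ * Pn) / (m * U) ∧
    ⟪n, v⟫ = 0 := by
  set a := ⟪t, v⟫ with ha
  set b := ⟪o, v⟫ with hb
  set s := Real.sqrt (a ^ 2 + b ^ 2) with hsdef
  have hsne : s ≠ 0 := fun h => hσne (by rw [hσ, h, mul_zero])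
  have hspos : 0 < s := lt_of_le_of_ne (Real.sqrt_nonneg _) (Ne.symm hsne)
  have hsq : s ^ 2 = a ^ 2 + b ^ 2 := Real.sq_sqrt (by positivity)
  rw [hσ] at hF1 hF2
  have hPt : e * μ * a * Pn + s * Pt = 0 := by
    have h0 : e * (e * μ * a * Pn + s * Pt) = 0 := by linear_combination -hF1
    exact (mul_eq_zero.mp h0).resolve_left he.ne'
  have hPo : e * μ * b * Pn + s * Po = 0 := by
    have h0 : e * (e * μ * b * Pn + s * Po) = 0 := by linear_combination -hF2
    exact (mul_eq_zero.mp h0).resolve_left he.ne'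
  set K := m * s + e * μ * Pn with hK
  have hKpos : 0 < K := by
    have := mul_pos hm hspos
    have : 0 ≤ e * μ * Pn := by positivity
    nlinarith [mul_pos hm hspos]
  have hta : a * K = T * s := by
    rw [hT]
    linear_combination s * hN1 + hPt
  have htb : b * K = O * s := by
    rw [hO]
    linear_combination s * hN2 + hPo
  have hTO : T ^ 2 + O ^ 2 = K ^ 2 := by
    have h : (T ^ 2 + O ^ 2) * s ^ 2 = K ^ 2 * s ^ 2 := by
      linear_combination (-(a * K) - T * s) * hta + (-(b * K) - O * s) * htb + (-(K ^ 2)) * hsq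
    exact mul_right_cancel₀ (pow_ne_zero 2 hsne) h
  have hUK : U = K := by rw [hU, hTO, Real.sqrt_sq hKpos.le]
  have hms : mul_pos hm hspos = mul_pos hm hspos := rfl
  refine ⟨?_, ?_, ?_, hvn⟩
  · rw [hUK, hK]; linarith [mul_pos hm hspos]
  · have hUs : U - e * μ * Pn = m * s := by rw [hUK, hK]; ring
    rw [hUs, hUK, eq_div_iff (by positivity : m * K ≠ 0)]
    linear_combination m * hta
  · have hUs : U - e * μ * Pn = m * s := by rw [hUK, hK]; ring
    rw [hUs, hUK, eq_div_iff (by positivity : m * K ≠ 0)]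
    linear_combination m * htb
end

section
/- In the discrete-time model of pure-translation planar sliding, the state of the object at the end of the time step is unique: if (v, P_t, P_o, P_n, P_r, σ) and (v', P_t', P_o', P_n', P_r', σ') are two solutions of the governing equations (as in the context) with P_n ≥ 0, P_n' ≥ 0 and σ ≠ 0, σ' ≠ 0, then v = v', P_t = P_t', P_o = P_o', P_n = P_n', and P_r = P_r' = 0. -/
/-!
Since `⟨n, v⟩ = ⟨n, v⁰⟩ = 0`, the normal Newton equation gives `P_n = -⟨n, J⟩` for both
solutions. In the plane, Newton's and the friction equations combine into
`(m e ‖v‖ + e² μ P_n) v = e ‖v‖ c`, where `c` is the free tangential momentum. Taking norms gives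
`m e ‖v‖ + e² μ P_n = e ‖c‖`, which fixes `‖v‖`; the coefficient in front of `v` is then positive
and known, so `v` itself is determined.
-/

open RealInnerProductSpace

theorem Orthonormal.eq_of_forall_inner_eq {𝕜 E ι : Type*} [RCLike 𝕜] [NormedAddCommGroup E]
    [InnerProductSpace 𝕜 E] [Fintype ι] [Nonempty ι] {b : ι → E} (hb : Orthonormal 𝕜 b)
    (hcard : Fintype.card ι = Module.finrank 𝕜 E) {x y : E}
    (h : ∀ i, inner 𝕜 (b i) x = inner 𝕜 (b i) y) : x = y :=
  InnerProductSpace.ext_inner_left_basis (basisOfOrthonormalOfCardEqFinrank hb hcard)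
    (by simpa using h)

theorem EuclideanSpace.norm_toLp_fin_two (a b : ℝ) : ‖!₂[a, b]‖ = √(a ^ 2 + b ^ 2) := by
  simp [EuclideanSpace.norm_eq, Fin.sum_univ_two]

section Normed

variable {E : Type*} [NormedAddCommGroup E] [NormedSpace ℝ E]

theorem add_mul_norm_eq_norm_of_smul_eq_norm_smul {a k : ℝ} {x b : E} (ha : 0 ≤ a)
    (hk : 0 ≤ k) (hx : x ≠ 0) (h : (a * ‖x‖ + k) • x = ‖x‖ • b) : a * ‖x‖ + k = ‖b‖ := by
  have hnorm := congrArg norm h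
  rw [norm_smul, norm_smul, Real.norm_of_nonneg (by positivity), norm_norm, mul_comm] at hnorm
  exact mul_left_cancel₀ (norm_ne_zero_iff.2 hx) hnorm

theorem eq_of_smul_eq_norm_smul {a k : ℝ} {x x' b : E} (ha : 0 < a) (hk : 0 ≤ k)
    (hx : x ≠ 0) (hx' : x' ≠ 0) (h : (a * ‖x‖ + k) • x = ‖x‖ • b)
    (h' : (a * ‖x'‖ + k) • x' = ‖x'‖ • b) : x = x' := by
  have hnorm : ‖x‖ = ‖x'‖ := by
    have := (add_mul_norm_eq_norm_of_smul_eq_norm_smul ha.le hk hx h).trans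
      (add_mul_norm_eq_norm_of_smul_eq_norm_smul ha.le hk hx' h').symm
    exact mul_left_cancel₀ ha.ne' (add_right_cancel this)
  have hpos : 0 < a * ‖x‖ + k := by
    have := norm_pos_iff.2 hx
    positivity
  refine smul_right_injective E hpos.ne' ?_
  calc (a * ‖x‖ + k) • x = ‖x‖ • b := h
    _ = (a * ‖x‖ + k) • x' := by rw [hnorm, h']

/-- `c` is the tangential part of the free momentum `J + m v⁰`, and `e * ‖v‖` is the slip speed `σ`. -/
def IsSlidingSolution (m e μ Pn : ℝ) (c v P : E) : Prop :=
  m • v = P + c ∧ (e ^ 2 * μ * Pn) • v + (e * ‖v‖) • P = 0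

theorem IsSlidingSolution.smul_eq_norm_smul {m e μ Pn : ℝ} {c v P : E}
    (h : IsSlidingSolution m e μ Pn c v P) :
    (m * e * ‖v‖ + e ^ 2 * μ * Pn) • v = ‖v‖ • (e • c) := by
  linear_combination (norm := module) (e * ‖v‖) • h.1 + h.2

theorem IsSlidingSolution.unique {m e μ Pn : ℝ} {c v P v' P' : E} (hm : 0 < m) (he : 0 < e)
    (hμ : 0 ≤ μ) (hPn : 0 ≤ Pn) (hv : v ≠ 0) (hv' : v' ≠ 0)
    (h : IsSlidingSolution m e μ Pn c v P) (h' : IsSlidingSolution m e μ Pn c v' P') :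
    v = v' ∧ P = P' := by
  have hvv : v = v' := eq_of_smul_eq_norm_smul (mul_pos hm he) (by positivity) hv hv'
    h.smul_eq_norm_smul h'.smul_eq_norm_smul
  refine ⟨hvv, ?_⟩
  rw [eq_sub_of_add_eq h.1.symm, eq_sub_of_add_eq h'.1.symm, hvv]

end Normed

theorem isSlidingSolution_toLp {m e μ Pn ct co vt vo Pt Po : ℝ}
    (hN1 : m * vt = Pt + ct) (hN2 : m * vo = Po + co)
    (hF1 : 0 = e ^ 2 * μ * vt * Pn + e * √(vt ^ 2 + vo ^ 2) * Pt)
    (hF2 : 0 = e ^ 2 * μ * vo * Pn + e * √(vt ^ 2 + vo ^ 2) * Po) :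
    IsSlidingSolution m e μ Pn !₂[ct, co] !₂[vt, vo] !₂[Pt, Po] := by
  rw [IsSlidingSolution, EuclideanSpace.norm_toLp_fin_two]
  constructor <;> ext i <;> fin_cases i <;> simp <;> linarith

theorem pure_translation_unique_state_general
    (m e μ : ℝ) (hm : 0 < m) (he : 0 < e) (hμ : 0 < μ)
    (t o n J v0 : EuclideanSpace ℝ (Fin 3))
    (hframe : Orthonormal ℝ ![t, o, n])
    (hv0n : ⟪n, v0⟫ = 0)
    (v v' : EuclideanSpace ℝ (Fin 3))
    (Pn Pt Po Pr σ Pn' Pt' Po' Pr' σ' : ℝ)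
    -- first solution
    (hvn : ⟪n, v⟫ = 0)
    (hN1 : m * ⟪t, v⟫ = Pt + ⟪t, J⟫ + m * ⟪t, v0⟫)
    (hN2 : m * ⟪o, v⟫ = Po + ⟪o, J⟫ + m * ⟪o, v0⟫)
    (hN3 : m * ⟪n, v⟫ = Pn + ⟪n, J⟫ + m * ⟪n, v0⟫)
    (hσ : σ = e * Real.sqrt (⟪t, v⟫ ^ 2 + ⟪o, v⟫ ^ 2))
    (hF1 : 0 = e ^ 2 * μ * ⟪t, v⟫ * Pn + σ * Pt)
    (hF2 : 0 = e ^ 2 * μ * ⟪o, v⟫ * Pn + σ * Po)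
    (hF3 : 0 = σ * Pr)
    (hPn : 0 ≤ Pn) (hσne : σ ≠ 0)
    -- second solution
    (hvn' : ⟪n, v'⟫ = 0)
    (hN1' : m * ⟪t, v'⟫ = Pt' + ⟪t, J⟫ + m * ⟪t, v0⟫)
    (hN2' : m * ⟪o, v'⟫ = Po' + ⟪o, J⟫ + m * ⟪o, v0⟫)
    (hN3' : m * ⟪n, v'⟫ = Pn' + ⟪n, J⟫ + m * ⟪n, v0⟫)
    (hσ' : σ' = e * Real.sqrt (⟪t, v'⟫ ^ 2 + ⟪o, v'⟫ ^ 2))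
    (hF1' : 0 = e ^ 2 * μ * ⟪t, v'⟫ * Pn' + σ' * Pt')
    (hF2' : 0 = e ^ 2 * μ * ⟪o, v'⟫ * Pn' + σ' * Po')
    (hF3' : 0 = σ' * Pr')
    (hσne' : σ' ≠ 0) :
    v = v' ∧ Pt = Pt' ∧ Po = Po' ∧ Pn = Pn' ∧ Pr = Pr' ∧ Pr = 0 := by
  have hPn_eq : Pn = Pn' := by
    rw [hvn, hv0n] at hN3
    rw [hvn', hv0n] at hN3'
    linarith
  have hPr : Pr = 0 := (mul_eq_zero.1 hF3.symm).resolve_left hσne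
  have hPr' : Pr' = 0 := (mul_eq_zero.1 hF3'.symm).resolve_left hσne'
  subst hPn_eq hσ hσ'
  have hsol := isSlidingSolution_toLp (hN1.trans (add_assoc ..)) (hN2.trans (add_assoc ..)) hF1 hF2
  have hsol' :=
    isSlidingSolution_toLp (hN1'.trans (add_assoc ..)) (hN2'.trans (add_assoc ..)) hF1' hF2'
  have hslip {a b : ℝ} (h : e * √(a ^ 2 + b ^ 2) ≠ 0) : !₂[a, b] ≠ 0 :=
    norm_ne_zero_iff.1 (by rw [EuclideanSpace.norm_toLp_fin_two]; exact right_ne_zero_of_mul h)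
  obtain ⟨hvel, himp⟩ := hsol.unique hm he hμ.le hPn (hslip hσne) (hslip hσne') hsol'
  obtain ⟨hvt, hvo⟩ : ⟪t, v⟫ = ⟪t, v'⟫ ∧ ⟪o, v⟫ = ⟪o, v'⟫ := by simpa using hvel
  obtain ⟨hPt, hPo⟩ : Pt = Pt' ∧ Po = Po' := by simpa using himp
  refine ⟨hframe.eq_of_forall_inner_eq (by simp) fun i => ?_, hPt, hPo, rfl,
    hPr.trans hPr'.symm, hPr⟩
  fin_cases i <;> simp [hvt, hvo, hvn, hvn']

/-- Uniqueness for pure-translation planar sliding: any two solutions of the governing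
discrete-time equations with nonnegative normal impulse and nonzero slip speed have the
same end-of-step velocity and the same aggregate contact impulses, and the aggregate
frictional moment-impulse vanishes. -/
theorem pure_translation_unique_state
    (m e μ : ℝ) (hm : 0 < m) (he : 0 < e) (hμ : 0 < μ)
    (t o n J v0 : EuclideanSpace ℝ (Fin 3))
    (hframe : Orthonormal ℝ ![t, o, n])
    (hv0n : ⟪n, v0⟫ = 0)
    (v v' : EuclideanSpace ℝ (Fin 3))
    (Pn Pt Po Pr σ Pn' Pt' Po' Pr' σ' : ℝ)
    -- first solution
    (hvn : ⟪n, v⟫ = 0)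
    (hN1 : m * ⟪t, v⟫ = Pt + ⟪t, J⟫ + m * ⟪t, v0⟫)
    (hN2 : m * ⟪o, v⟫ = Po + ⟪o, J⟫ + m * ⟪o, v0⟫)
    (hN3 : m * ⟪n, v⟫ = Pn + ⟪n, J⟫ + m * ⟪n, v0⟫)
    (hσ : σ = e * Real.sqrt (⟪t, v⟫ ^ 2 + ⟪o, v⟫ ^ 2))
    (hF1 : 0 = e ^ 2 * μ * ⟪t, v⟫ * Pn + σ * Pt)
    (hF2 : 0 = e ^ 2 * μ * ⟪o, v⟫ * Pn + σ * Po)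
    (hF3 : 0 = σ * Pr)
    (hPn : 0 ≤ Pn) (hσne : σ ≠ 0)
    -- second solution
    (hvn' : ⟪n, v'⟫ = 0)
    (hN1' : m * ⟪t, v'⟫ = Pt' + ⟪t, J⟫ + m * ⟪t, v0⟫)
    (hN2' : m * ⟪o, v'⟫ = Po' + ⟪o, J⟫ + m * ⟪o, v0⟫)
    (hN3' : m * ⟪n, v'⟫ = Pn' + ⟪n, J⟫ + m * ⟪n, v0⟫)
    (hσ' : σ' = e * Real.sqrt (⟪t, v'⟫ ^ 2 + ⟪o, v'⟫ ^ 2))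
    (hF1' : 0 = e ^ 2 * μ * ⟪t, v'⟫ * Pn' + σ' * Pt')
    (hF2' : 0 = e ^ 2 * μ * ⟪o, v'⟫ * Pn' + σ' * Po')
    (hF3' : 0 = σ' * Pr')
    (hPn' : 0 ≤ Pn') (hσne' : σ' ≠ 0) :
    v = v' ∧ Pt = Pt' ∧ Po = Po' ∧ Pn = Pn' ∧ Pr = Pr' ∧ Pr = 0 :=
  pure_translation_unique_state_general m e μ hm he hμ t o n J v0 hframe hv0n v v' Pn Pt Po Pr σ Pn'
    Pt' Po' Pr' σ' hvn hN1 hN2 hN3 hσ hF1 hF2 hF3 hPn hσne hvn' hN1' hN2' hN3' hσ' hF1' hF2' hF3'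
    hσne'
end

section
/- Let v_t, v_o, v_r ∈ ℝ be slip-velocity components, e_t, e_o, e_r > 0, μ > 0, p_n ≥ 0, and set σ = √(e_t²·v_t² + e_o²·v_o² + e_r²·v_r²); assume σ > 0. Then for every triple (p_t, p_o, p_r) in the friction ellipsoid, i.e. with p_t²/e_t² + p_o²/e_o² + p_r²/e_r² ≤ μ²·p_n², the dissipated power satisfies −(v_t·p_t + v_o·p_o + v_r·p_r) ≤ μ·p_n·σ, and this maximum value is attained at the triple p_t* = −e_t²·μ·p_n·v_t/σ, p_o* = −e_o²·μ·p_n·v_o/σ, p_r* = −e_r²·μ·p_n·v_r/σ, which lies in the friction ellipsoid and satisfies the complementarity-form friction equations 0 = e_t²·μ·p_n·v_t + p_t*·σ, 0 = e_o²·μ·p_n·v_o + p_o*·σ, 0 = e_r²·μ·p_n·v_r + p_r*·σ, together with μ²·p_n² − (p_t*)²/e_t² − (p_o*)²/e_o² − (p_r*)²/e_r² = 0. -/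
/-!
Rescaling `q i = p i / e i` turns the friction ellipsoid into the ball of radius `μ p_n` and the
power `-∑ v i p i` into the pairing `-∑ (e i v i) q i`; Cauchy–Schwarz bounds it by `μ p_n σ`, with
equality for `q` antiparallel to `(e i v i)`, i.e. at `p i = -e i ^ 2 μ p_n v i / σ`.
-/

open Finset

section MaxDissipation

variable {ι : Type*} {s : Finset ι} {e v p : ι → ℝ} {r σ : ℝ}

theorem neg_sum_mul_le_of_sum_sq_div_sq_le (he : ∀ i ∈ s, e i ≠ 0) (hr : 0 ≤ r)
    (hp : ∑ i ∈ s, p i ^ 2 / e i ^ 2 ≤ r ^ 2) :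
    -∑ i ∈ s, v i * p i ≤ r * √(∑ i ∈ s, e i ^ 2 * v i ^ 2) := by
  have hcs := Real.sum_mul_le_sqrt_mul_sqrt s (fun i => -(e i * v i)) (fun i => p i / e i)
  have hpairing : ∑ i ∈ s, -(e i * v i) * (p i / e i) = -∑ i ∈ s, v i * p i := by
    rw [← sum_neg_distrib]
    refine sum_congr rfl fun i hi => ?_
    field_simp [he i hi]
  simp only [hpairing, neg_sq, mul_pow, div_pow] at hcs
  calc -∑ i ∈ s, v i * p i
      ≤ √(∑ i ∈ s, e i ^ 2 * v i ^ 2) * √(∑ i ∈ s, p i ^ 2 / e i ^ 2) := hcs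
    _ ≤ √(∑ i ∈ s, e i ^ 2 * v i ^ 2) * r :=
        mul_le_mul_of_nonneg_left ((Real.sqrt_le_sqrt hp).trans_eq (Real.sqrt_sq hr))
          (Real.sqrt_nonneg _)
    _ = r * √(∑ i ∈ s, e i ^ 2 * v i ^ 2) := mul_comm _ _

theorem sum_sq_div_sq_eq_of_eq_neg_div (he : ∀ i ∈ s, e i ≠ 0)
    (hσ : σ ^ 2 = ∑ i ∈ s, e i ^ 2 * v i ^ 2) (hσ0 : σ ≠ 0)
    (hp : ∀ i ∈ s, p i = -(e i ^ 2 * r * v i) / σ) :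
    ∑ i ∈ s, p i ^ 2 / e i ^ 2 = r ^ 2 := by
  calc ∑ i ∈ s, p i ^ 2 / e i ^ 2 = ∑ i ∈ s, r ^ 2 / σ ^ 2 * (e i ^ 2 * v i ^ 2) :=
        sum_congr rfl fun i hi => by rw [hp i hi]; field_simp [he i hi]
    _ = r ^ 2 := by rw [← mul_sum, ← hσ]; field_simp

theorem neg_sum_mul_eq_of_eq_neg_div (hσ : σ ^ 2 = ∑ i ∈ s, e i ^ 2 * v i ^ 2) (hσ0 : σ ≠ 0)
    (hp : ∀ i ∈ s, p i = -(e i ^ 2 * r * v i) / σ) :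
    -∑ i ∈ s, v i * p i = r * σ := by
  calc -∑ i ∈ s, v i * p i = ∑ i ∈ s, r / σ * (e i ^ 2 * v i ^ 2) := by
        rw [← sum_neg_distrib]
        exact sum_congr rfl fun i hi => by rw [hp i hi]; field_simp
    _ = r * σ := by rw [← mul_sum, ← hσ]; field_simp

theorem add_mul_eq_zero_of_eq_neg_div {a p σ : ℝ} (hσ0 : σ ≠ 0) (hp : p = -a / σ) :
    a + p * σ = 0 := by
  rw [hp, div_mul_cancel₀ _ hσ0, add_neg_cancel]

end MaxDissipation

/-- Maximum power dissipation principle over the friction ellipsoid: the dissipated power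
is bounded by `μ·p_n·σ`, and the bound is attained at the triple `(p_t*, p_o*, p_r*)`,
which lies on the friction ellipsoid and satisfies the complementarity-form friction
equations. -/
theorem friction_max_power_dissipation
    (vt vo vr et eo er μ pn σ : ℝ)
    (het : 0 < et) (heo : 0 < eo) (her : 0 < er)
    (hμ : 0 < μ) (hpn : 0 ≤ pn)
    (hσ : σ = Real.sqrt (et ^ 2 * vt ^ 2 + eo ^ 2 * vo ^ 2 + er ^ 2 * vr ^ 2))
    (hσpos : 0 < σ)
    (pt' po' pr' : ℝ)
    (hpt' : pt' = -(et ^ 2 * μ * pn * vt) / σ)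
    (hpo' : po' = -(eo ^ 2 * μ * pn * vo) / σ)
    (hpr' : pr' = -(er ^ 2 * μ * pn * vr) / σ) :
    (∀ pt po pr : ℝ,
      pt ^ 2 / et ^ 2 + po ^ 2 / eo ^ 2 + pr ^ 2 / er ^ 2 ≤ μ ^ 2 * pn ^ 2 →
      -(vt * pt + vo * po + vr * pr) ≤ μ * pn * σ) ∧
    pt' ^ 2 / et ^ 2 + po' ^ 2 / eo ^ 2 + pr' ^ 2 / er ^ 2 ≤ μ ^ 2 * pn ^ 2 ∧
    -(vt * pt' + vo * po' + vr * pr') = μ * pn * σ ∧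
    0 = et ^ 2 * μ * pn * vt + pt' * σ ∧
    0 = eo ^ 2 * μ * pn * vo + po' * σ ∧
    0 = er ^ 2 * μ * pn * vr + pr' * σ ∧
    μ ^ 2 * pn ^ 2 - pt' ^ 2 / et ^ 2 - po' ^ 2 / eo ^ 2 - pr' ^ 2 / er ^ 2 = 0 := by
  set e : Fin 3 → ℝ := ![et, eo, er]
  set v : Fin 3 → ℝ := ![vt, vo, vr]
  have he : ∀ i ∈ univ, e i ≠ 0 := by
    simp [e, Fin.forall_fin_succ, het.ne', heo.ne', her.ne']
  have hσsq : σ ^ 2 = ∑ i, e i ^ 2 * v i ^ 2 := by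
    rw [hσ, Real.sq_sqrt (by positivity)]
    simp [e, v, Fin.sum_univ_three]
  have hp' : ∀ i ∈ univ, ![pt', po', pr'] i = -(e i ^ 2 * (μ * pn) * v i) / σ := by
    simp [e, v, Fin.forall_fin_succ, hpt', hpo', hpr', mul_assoc]
  have on_boundary := sum_sq_div_sq_eq_of_eq_neg_div he hσsq hσpos.ne' hp'
  have attains := neg_sum_mul_eq_of_eq_neg_div hσsq hσpos.ne' hp'
  simp only [e, v, Fin.sum_univ_three, Matrix.cons_val_zero, Matrix.cons_val_one,
    Matrix.cons_val_two, Matrix.head_cons, Matrix.tail_cons, mul_pow] at on_boundary attains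
  refine ⟨fun pt po pr hp => ?_, on_boundary.le, attains, ?_, ?_, ?_, by linarith⟩
  · have := neg_sum_mul_le_of_sum_sq_div_sq_le (v := v) (p := ![pt, po, pr]) (r := μ * pn) he
      (by positivity) (by simpa [e, Fin.sum_univ_three, mul_pow] using hp)
    simpa [e, v, Fin.sum_univ_three, ← hσ] using this
  all_goals exact (add_mul_eq_zero_of_eq_neg_div hσpos.ne' ‹_›).symm
end
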